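/- Let N ∈ ℕ, let A_k : [0,T] → ℂ be differentiable for −N ≤ k ≤ N, set ψ(α ± iξ, t) = Σ_{k=−N}^{N} A_k(t) e^{ikα} e^{±kξ}, and let h : [0,T] → (0,∞) be a differentiable decreasing function. Then (∂/∂t) Σ_± ∫_𝕋 |ψ(α ± ih(t), t)|² dα ≤ (h'(t)/10) Σ_± ∫_𝕋 Λψ(α ± ih(t), t) · conj(ψ(α ± ih(t), t)) dα − 10 h'(t) ∫_𝕋 Λψ(α, t) · conj(ψ(α, t)) dα + 2ℜ Σ_± ∫_𝕋 ψ_t(α ± ih(t), t) · conj(ψ(α ± ih(t), t)) dα, where Λ acts in the α-variable by Λ(e^{ikα}) = |k| e^{ikα}, i.e. Λψ(α ± iξ, t) = Σ_k |k| A_k(t) e^{ikα} e^{±kξ}. -/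

import Mathlib

open MeasureTheory Set intervalIntegral

noncomputable section

/-- The trigonometric polynomial `ψ(α ± iξ, t) = Σ_{k=-N}^{N} A_k(t) e^{ikα} e^{±kξ}`
(the sign `±` is the real parameter `ε`). -/
def psiFun (N : ℕ) (A : ℤ → ℝ → ℂ) (ε t ξ α : ℝ) : ℂ :=
  ∑ k ∈ Finset.Icc (-(N : ℤ)) (N : ℤ),
    A k t * Complex.exp ((k : ℂ) * Complex.I * (α : ℂ)) *
      Complex.exp (((ε * (k : ℝ) * ξ : ℝ) : ℂ))

/-- `Λψ`, where `Λ` acts in the `α` variable through `Λ(e^{ikα}) = |k| e^{ikα}`. -/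
def lamPsiFun (N : ℕ) (A : ℤ → ℝ → ℂ) (ε t ξ α : ℝ) : ℂ :=
  ∑ k ∈ Finset.Icc (-(N : ℤ)) (N : ℤ),
    ((|(k : ℝ)| : ℝ) : ℂ) * A k t * Complex.exp ((k : ℂ) * Complex.I * (α : ℂ)) *
      Complex.exp (((ε * (k : ℝ) * ξ : ℝ) : ℂ))

/-- `ψ_t`, the time derivative of `ψ` (with `A'_k = (A_k)'`). -/
def psiTFun (N : ℕ) (A' : ℤ → ℝ → ℂ) (ε t ξ α : ℝ) : ℂ :=
  ∑ k ∈ Finset.Icc (-(N : ℤ)) (N : ℤ),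
    A' k t * Complex.exp ((k : ℂ) * Complex.I * (α : ℂ)) *
      Complex.exp (((ε * (k : ℝ) * ξ : ℝ) : ℂ))

open Filter Topology

namespace TrigPolyStrip

lemma orth (m : ℤ) :
    (∫ α in (-Real.pi)..Real.pi, Complex.exp ((m : ℂ) * Complex.I * (α : ℂ))) =
      if m = 0 then ((2 * Real.pi : ℝ) : ℂ) else 0 := by
  rcases eq_or_ne m 0 with hm | hm
  · rw [if_pos hm]
    simp only [hm, Int.cast_zero, zero_mul, Complex.exp_zero]
    rw [intervalIntegral.integral_const, Complex.real_smul]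
    push_cast; ring
  · rw [if_neg hm]
    have hc : (m : ℂ) * Complex.I ≠ 0 :=
      mul_ne_zero (by exact_mod_cast hm) Complex.I_ne_zero
    rw [show (fun α : ℝ => Complex.exp ((m : ℂ) * Complex.I * (α : ℂ)))
        = fun α : ℝ => Complex.exp (((m:ℂ) * Complex.I) * (α:ℂ)) from rfl]
    rw [integral_exp_mul_complex hc]
    have h1 : Complex.exp ((m:ℂ) * Complex.I * (Real.pi : ℂ)) = (-1 : ℂ) ^ m := by
      rw [show (m:ℂ) * Complex.I * (Real.pi : ℂ) = (m:ℂ) * ((Real.pi:ℂ) * Complex.I) by ring,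
        Complex.exp_int_mul, Complex.exp_pi_mul_I]
    have h2 : Complex.exp ((m:ℂ) * Complex.I * ((-Real.pi : ℝ) : ℂ)) = ((-1 : ℂ) ^ m)⁻¹ := by
      rw [show ((m:ℂ) * Complex.I * ((-Real.pi : ℝ) : ℂ))
          = ((-m : ℤ):ℂ) * ((Real.pi:ℂ) * Complex.I) by push_cast; ring,
        Complex.exp_int_mul, Complex.exp_pi_mul_I, zpow_neg]
    have h3 : ((-1 : ℂ) ^ m)⁻¹ = (-1 : ℂ) ^ m := by
      refine inv_eq_of_mul_eq_one_right ?_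
      rw [← zpow_add₀ (by norm_num : (-1:ℂ) ≠ 0), show m + m = 2 * m by ring, zpow_mul]
      norm_num
    rw [h1, h2, h3, sub_self, zero_div]

lemma key (S : Finset ℤ) (c d : ℤ → ℂ) :
    (∫ α in (-Real.pi)..Real.pi,
        (∑ k ∈ S, c k * Complex.exp ((k:ℂ) * Complex.I * (α:ℂ))) *
          (starRingEnd ℂ) (∑ k ∈ S, d k * Complex.exp ((k:ℂ) * Complex.I * (α:ℂ)))) =
      ((2 * Real.pi : ℝ) : ℂ) * ∑ k ∈ S, c k * (starRingEnd ℂ) (d k) := by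
  have step : ∀ α : ℝ,
      (∑ k ∈ S, c k * Complex.exp ((k:ℂ) * Complex.I * (α:ℂ))) *
        (starRingEnd ℂ) (∑ k ∈ S, d k * Complex.exp ((k:ℂ) * Complex.I * (α:ℂ)))
      = ∑ k ∈ S, ∑ j ∈ S, (c k * (starRingEnd ℂ) (d j)) *
          Complex.exp (((k - j : ℤ):ℂ) * Complex.I * (α:ℂ)) := by
    intro α
    rw [map_sum, Finset.sum_mul_sum]
    refine Finset.sum_congr rfl fun k _ => Finset.sum_congr rfl fun j _ => ?_
    have hconj : (starRingEnd ℂ) (Complex.exp ((j:ℂ) * Complex.I * (α:ℂ)))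
        = Complex.exp (-((j:ℂ) * Complex.I * (α:ℂ))) := by
      rw [← Complex.exp_conj]
      congr 1
      simp [Complex.conj_ofReal]
    rw [map_mul, hconj, ← mul_assoc]
    rw [show c k * Complex.exp ((k:ℂ) * Complex.I * (α:ℂ)) * (starRingEnd ℂ) (d j)
        = (c k * (starRingEnd ℂ) (d j)) * Complex.exp ((k:ℂ) * Complex.I * (α:ℂ)) by ring,
      mul_assoc, ← Complex.exp_add]
    congr 2
    push_cast
    ring
  rw [intervalIntegral.integral_congr (g := fun α : ℝ => ∑ k ∈ S, ∑ j ∈ S,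
      (c k * (starRingEnd ℂ) (d j)) * Complex.exp (((k - j : ℤ):ℂ) * Complex.I * (α:ℂ)))
      (fun α _ => step α)]
  have hcont : ∀ (m : ℤ), Continuous fun α : ℝ => Complex.exp ((m:ℂ) * Complex.I * (α:ℂ)) := by
    intro m
    exact Complex.continuous_exp.comp (by continuity)
  rw [intervalIntegral.integral_finset_sum]
  swap
  · intro k _
    apply Continuous.intervalIntegrable
    exact continuous_finset_sum _ fun j _ => continuous_const.mul ((hcont _))
  trans (∑ k ∈ S, c k * (starRingEnd ℂ) (d k) * ((2 * Real.pi : ℝ) : ℂ))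
  · refine Finset.sum_congr rfl fun k hk => ?_
    rw [intervalIntegral.integral_finset_sum
      (h := fun j _ => (continuous_const.fun_mul (hcont _)).intervalIntegrable _ _)]
    trans (∑ j ∈ S, (c k * (starRingEnd ℂ) (d j)) *
      (if k - j = 0 then ((2 * Real.pi : ℝ) : ℂ) else 0))
    · refine Finset.sum_congr rfl fun j _ => ?_
      rw [intervalIntegral.integral_const_mul, orth (k - j)]
    · simp only [sub_eq_zero, mul_ite, mul_zero]
      rw [Finset.sum_ite_eq S k (fun j => c k * (starRingEnd ℂ) (d j) * ((2 * Real.pi : ℝ) : ℂ)),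
        if_pos hk]
  · rw [← Finset.sum_mul, mul_comm]

variable (N : ℕ) (A A' : ℤ → ℝ → ℂ) (ε t ξ : ℝ)

lemma psi_repr (α : ℝ) : psiFun N A ε t ξ α =
    ∑ k ∈ Finset.Icc (-(N : ℤ)) (N : ℤ),
      (A k t * ((Real.exp (ε * (k:ℝ) * ξ) : ℝ) : ℂ)) * Complex.exp ((k:ℂ) * Complex.I * (α:ℂ)) := by
  refine Finset.sum_congr rfl fun k _ => ?_
  rw [Complex.ofReal_exp]; ring

lemma lam_repr (α : ℝ) : lamPsiFun N A ε t ξ α =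
    ∑ k ∈ Finset.Icc (-(N : ℤ)) (N : ℤ),
      ((((|(k : ℝ)| : ℝ)) : ℂ) * A k t * ((Real.exp (ε * (k:ℝ) * ξ) : ℝ) : ℂ)) *
        Complex.exp ((k:ℂ) * Complex.I * (α:ℂ)) := by
  refine Finset.sum_congr rfl fun k _ => ?_
  rw [Complex.ofReal_exp]; ring

lemma psiT_repr (α : ℝ) : psiTFun N A' ε t ξ α =
    ∑ k ∈ Finset.Icc (-(N : ℤ)) (N : ℤ),
      (A' k t * ((Real.exp (ε * (k:ℝ) * ξ) : ℝ) : ℂ)) * Complex.exp ((k:ℂ) * Complex.I * (α:ℂ)) := by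
  refine Finset.sum_congr rfl fun k _ => ?_
  rw [Complex.ofReal_exp]; ring

lemma sqint :
    (∫ α in (-Real.pi)..Real.pi, ‖psiFun N A ε t ξ α‖ ^ 2) =
      2 * Real.pi * ∑ k ∈ Finset.Icc (-(N : ℤ)) (N : ℤ),
        Complex.normSq (A k t) * Real.exp (ε * (k:ℝ) * ξ) ^ 2 := by
  have h0 : ∀ z : ℂ, ((‖z‖ ^ 2 : ℝ) : ℂ) = z * (starRingEnd ℂ) z := by
    intro z
    rw [Complex.mul_conj, Complex.normSq_eq_norm_sq]
  have h1 : (((∫ α in (-Real.pi)..Real.pi, ‖psiFun N A ε t ξ α‖ ^ 2 : ℝ)) : ℂ)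
      = ∫ α in (-Real.pi)..Real.pi,
          psiFun N A ε t ξ α * (starRingEnd ℂ) (psiFun N A ε t ξ α) := by
    rw [← intervalIntegral.integral_ofReal]
    exact intervalIntegral.integral_congr fun α _ => h0 _
  have h2 : (∫ α in (-Real.pi)..Real.pi,
        psiFun N A ε t ξ α * (starRingEnd ℂ) (psiFun N A ε t ξ α))
      = ((2 * Real.pi : ℝ) : ℂ) * ∑ k ∈ Finset.Icc (-(N : ℤ)) (N : ℤ),
          (A k t * ((Real.exp (ε * (k:ℝ) * ξ) : ℝ) : ℂ)) *
            (starRingEnd ℂ) (A k t * ((Real.exp (ε * (k:ℝ) * ξ) : ℝ) : ℂ)) := by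
    rw [← key]
    exact intervalIntegral.integral_congr fun α _ => by
      rw [psi_repr N A ε t ξ α]
  have h3 : ∀ k : ℤ,
      (A k t * ((Real.exp (ε * (k:ℝ) * ξ) : ℝ) : ℂ)) *
        (starRingEnd ℂ) (A k t * ((Real.exp (ε * (k:ℝ) * ξ) : ℝ) : ℂ))
      = ((Complex.normSq (A k t) * Real.exp (ε * (k:ℝ) * ξ) ^ 2 : ℝ) : ℂ) := by
    intro k
    rw [map_mul, Complex.conj_ofReal,
      show A k t * ((Real.exp (ε * (k:ℝ) * ξ) : ℝ) : ℂ) *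
          ((starRingEnd ℂ) (A k t) * ((Real.exp (ε * (k:ℝ) * ξ) : ℝ) : ℂ))
        = (A k t * (starRingEnd ℂ) (A k t)) *
            (((Real.exp (ε * (k:ℝ) * ξ) : ℝ) : ℂ) * ((Real.exp (ε * (k:ℝ) * ξ) : ℝ) : ℂ)) by ring,
      Complex.mul_conj]
    push_cast
    ring
  have h5 : ((2 * Real.pi : ℝ) : ℂ) * ∑ k ∈ Finset.Icc (-(N : ℤ)) (N : ℤ),
        (A k t * ((Real.exp (ε * (k:ℝ) * ξ) : ℝ) : ℂ)) *
          (starRingEnd ℂ) (A k t * ((Real.exp (ε * (k:ℝ) * ξ) : ℝ) : ℂ))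
      = (((2 * Real.pi * ∑ k ∈ Finset.Icc (-(N : ℤ)) (N : ℤ),
          Complex.normSq (A k t) * Real.exp (ε * (k:ℝ) * ξ) ^ 2 : ℝ)) : ℂ) := by
    rw [Finset.sum_congr rfl fun k _ => h3 k]
    push_cast
    ring
  exact_mod_cast h1.trans (h2.trans h5)

lemma lamre :
    (∫ α in (-Real.pi)..Real.pi,
        lamPsiFun N A ε t ξ α * (starRingEnd ℂ) (psiFun N A ε t ξ α)).re =
      2 * Real.pi * ∑ k ∈ Finset.Icc (-(N : ℤ)) (N : ℤ),
        |(k : ℝ)| * Complex.normSq (A k t) * Real.exp (ε * (k:ℝ) * ξ) ^ 2 := by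
  have h2 : (∫ α in (-Real.pi)..Real.pi,
        lamPsiFun N A ε t ξ α * (starRingEnd ℂ) (psiFun N A ε t ξ α))
      = ((2 * Real.pi : ℝ) : ℂ) * ∑ k ∈ Finset.Icc (-(N : ℤ)) (N : ℤ),
          (((|(k : ℝ)| : ℝ) : ℂ) * A k t * ((Real.exp (ε * (k:ℝ) * ξ) : ℝ) : ℂ)) *
            (starRingEnd ℂ) (A k t * ((Real.exp (ε * (k:ℝ) * ξ) : ℝ) : ℂ)) := by
    rw [← key]
    exact intervalIntegral.integral_congr fun α _ => by
      rw [psi_repr N A ε t ξ α, lam_repr N A ε t ξ α]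
  have h3 : ∀ k : ℤ,
      (((|(k : ℝ)| : ℝ) : ℂ) * A k t * ((Real.exp (ε * (k:ℝ) * ξ) : ℝ) : ℂ)) *
        (starRingEnd ℂ) (A k t * ((Real.exp (ε * (k:ℝ) * ξ) : ℝ) : ℂ))
      = ((|(k : ℝ)| * Complex.normSq (A k t) * Real.exp (ε * (k:ℝ) * ξ) ^ 2 : ℝ) : ℂ) := by
    intro k
    rw [map_mul, Complex.conj_ofReal,
      show ((|(k : ℝ)| : ℝ) : ℂ) * A k t * ((Real.exp (ε * (k:ℝ) * ξ) : ℝ) : ℂ) *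
          ((starRingEnd ℂ) (A k t) * ((Real.exp (ε * (k:ℝ) * ξ) : ℝ) : ℂ))
        = ((|(k : ℝ)| : ℝ) : ℂ) * (A k t * (starRingEnd ℂ) (A k t)) *
            (((Real.exp (ε * (k:ℝ) * ξ) : ℝ) : ℂ) * ((Real.exp (ε * (k:ℝ) * ξ) : ℝ) : ℂ)) by ring,
      Complex.mul_conj]
    push_cast
    ring
  rw [h2, Finset.sum_congr rfl fun k _ => h3 k, ← Complex.ofReal_sum, ← Complex.ofReal_mul,
    Complex.ofReal_re]

lemma tre :
    (∫ α in (-Real.pi)..Real.pi,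
        psiTFun N A' ε t ξ α * (starRingEnd ℂ) (psiFun N A ε t ξ α)).re =
      2 * Real.pi * ∑ k ∈ Finset.Icc (-(N : ℤ)) (N : ℤ),
        (A' k t * (starRingEnd ℂ) (A k t)).re * Real.exp (ε * (k:ℝ) * ξ) ^ 2 := by
  have h2 : (∫ α in (-Real.pi)..Real.pi,
        psiTFun N A' ε t ξ α * (starRingEnd ℂ) (psiFun N A ε t ξ α))
      = ((2 * Real.pi : ℝ) : ℂ) * ∑ k ∈ Finset.Icc (-(N : ℤ)) (N : ℤ),
          (A' k t * ((Real.exp (ε * (k:ℝ) * ξ) : ℝ) : ℂ)) *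
            (starRingEnd ℂ) (A k t * ((Real.exp (ε * (k:ℝ) * ξ) : ℝ) : ℂ)) := by
    rw [← key]
    exact intervalIntegral.integral_congr fun α _ => by
      rw [psi_repr N A ε t ξ α, psiT_repr N A' ε t ξ α]
  have h3 : ∀ k : ℤ,
      ((A' k t * ((Real.exp (ε * (k:ℝ) * ξ) : ℝ) : ℂ)) *
        (starRingEnd ℂ) (A k t * ((Real.exp (ε * (k:ℝ) * ξ) : ℝ) : ℂ))).re
      = (A' k t * (starRingEnd ℂ) (A k t)).re * Real.exp (ε * (k:ℝ) * ξ) ^ 2 := by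
    intro k
    rw [map_mul, Complex.conj_ofReal,
      show A' k t * ((Real.exp (ε * (k:ℝ) * ξ) : ℝ) : ℂ) *
          ((starRingEnd ℂ) (A k t) * ((Real.exp (ε * (k:ℝ) * ξ) : ℝ) : ℂ))
        = ((Real.exp (ε * (k:ℝ) * ξ) ^ 2 : ℝ) : ℂ) * (A' k t * (starRingEnd ℂ) (A k t)) by
          push_cast; ring,
      Complex.re_ofReal_mul]
    ring
  rw [h2, Complex.re_ofReal_mul, Complex.re_sum]
  rw [Finset.sum_congr rfl fun k _ => h3 k]

lemma core (y H d n : ℝ) (hH : 0 ≤ H) (hd : d ≤ 0) (hn : 0 ≤ n) :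
    n * (2 * Real.exp (y*H)^2 * (y*d) - 2 * Real.exp (-(y*H))^2 * (y*d))
      ≤ d/10 * (|y| * n * (Real.exp (y*H)^2 + Real.exp (-(y*H))^2)) - 10*d*(|y| * n) := by
  have hX0 : (0:ℝ) < Real.exp (y*H)^2 := by positivity
  have hY0 : (0:ℝ) < Real.exp (-(y*H))^2 := by positivity
  rcases le_or_gt 0 y with hy | hy
  · have e1 : 1 ≤ Real.exp (y*H) := Real.one_le_exp (mul_nonneg hy hH)
    have e2 : Real.exp (-(y*H)) ≤ 1 := Real.exp_le_one_iff.mpr (by nlinarith)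
    have hX : 1 ≤ Real.exp (y*H)^2 := by nlinarith
    have hY : Real.exp (-(y*H))^2 ≤ 1 := by nlinarith [Real.exp_pos (-(y*H))]
    rw [abs_of_nonneg hy]
    nlinarith [mul_nonneg (mul_nonneg (neg_nonneg.2 hd) (mul_nonneg hy hn))
      (by nlinarith : (0:ℝ) ≤ 2*Real.exp (y*H)^2 - 2*Real.exp (-(y*H))^2
        - (Real.exp (y*H)^2 + Real.exp (-(y*H))^2)/10 + 10)]
  · have e1 : 1 ≤ Real.exp (-(y*H)) := Real.one_le_exp (by nlinarith)
    have e2 : Real.exp (y*H) ≤ 1 := Real.exp_le_one_iff.mpr (by nlinarith)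
    have hY : 1 ≤ Real.exp (-(y*H))^2 := by nlinarith
    have hX : Real.exp (y*H)^2 ≤ 1 := by nlinarith [Real.exp_pos (y*H)]
    rw [abs_of_neg hy]
    nlinarith [mul_nonneg (mul_nonneg (neg_nonneg.2 hd) (mul_nonneg (neg_nonneg.2 hy.le) hn))
      (by nlinarith : (0:ℝ) ≤ 2*Real.exp (-(y*H))^2 - 2*Real.exp (y*H)^2
        - (Real.exp (y*H)^2 + Real.exp (-(y*H))^2)/10 + 10)]

lemma anti_deriv_nonpos {h h' : ℝ → ℝ} (hh : ∀ t, HasDerivAt h (h' t) t)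
    (hdec : Antitone h) (t : ℝ) : h' t ≤ 0 := by
  have h1 : Tendsto (slope h t) (𝓝[>] t) (𝓝 (h' t)) :=
    (hasDerivAt_iff_tendsto_slope.mp (hh t)).mono_left
      (nhdsWithin_mono _ (fun x hx => ne_of_gt hx))
  refine le_of_tendsto h1 ?_
  filter_upwards [self_mem_nhdsWithin] with s hs
  rw [slope_def_field]
  exact div_nonpos_of_nonpos_of_nonneg (sub_nonpos.2 (hdec (le_of_lt hs)))
    (sub_nonneg.2 (le_of_lt hs))

lemma normSq_deriv {A A' : ℝ → ℂ} {t : ℝ} (hA : HasDerivAt A (A' t) t) :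
    HasDerivAt (fun s => Complex.normSq (A s)) (2 * (A' t * (starRingEnd ℂ) (A t)).re) t := by
  have hre : HasDerivAt (fun s => (A s).re) ((A' t).re) t :=
    Complex.reCLM.hasFDerivAt.comp_hasDerivAt t hA
  have him : HasDerivAt (fun s => (A s).im) ((A' t).im) t :=
    Complex.imCLM.hasFDerivAt.comp_hasDerivAt t hA
  have h0 := (hre.fun_mul hre).fun_add (him.fun_mul him)
  have heq : (fun s => Complex.normSq (A s))
      = fun s => (A s).re * (A s).re + (A s).im * (A s).im :=
    funext fun s => Complex.normSq_apply _
  rw [heq]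
  refine h0.congr_deriv ?_
  simp only [Complex.mul_re, Complex.conj_re, Complex.conj_im]
  ring

end TrigPolyStrip

open TrigPolyStrip

/-- **Lemma (corollary of Lemma 4.2 of \[CCFGL\])**: for a trigonometric polynomial
`ψ(α ± iξ, t) = Σ_{k=-N}^N A_k(t) e^{ikα} e^{±kξ}` and a positive decreasing
differentiable `h`,
`(∂/∂t) Σ_± ∫_𝕋 |ψ(α ± ih(t),t)|² dα
  ≤ (h'(t)/10) Σ_± ∫_𝕋 Λψ(α ± ih(t),t) conj ψ(α ± ih(t),t) dα
    - 10 h'(t) ∫_𝕋 Λψ(α,t) conj ψ(α,t) dα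
    + 2 ℜ Σ_± ∫_𝕋 ψ_t(α ± ih(t),t) conj ψ(α ± ih(t),t) dα`. -/
theorem trig_poly_strip_energy_inequality
    (N : ℕ) (T : ℝ) (hT : 0 < T)
    (A A' : ℤ → ℝ → ℂ) (hA : ∀ k t, HasDerivAt (A k) (A' k t) t)
    (h h' : ℝ → ℝ) (hh : ∀ t, HasDerivAt h (h' t) t)
    (hpos : ∀ t, 0 < h t) (hdec : Antitone h) :
    ∀ t ∈ Icc (0 : ℝ) T,
      deriv (fun s =>
          (∫ α in (-Real.pi)..Real.pi, ‖psiFun N A 1 s (h s) α‖ ^ 2)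
          + ∫ α in (-Real.pi)..Real.pi, ‖psiFun N A (-1) s (h s) α‖ ^ 2) t ≤
        (h' t / 10) *
            ((∫ α in (-Real.pi)..Real.pi,
                lamPsiFun N A 1 t (h t) α * starRingEnd ℂ (psiFun N A 1 t (h t) α))
              + ∫ α in (-Real.pi)..Real.pi,
                lamPsiFun N A (-1) t (h t) α *
                  starRingEnd ℂ (psiFun N A (-1) t (h t) α)).re
        - 10 * h' t *
            (∫ α in (-Real.pi)..Real.pi,
              lamPsiFun N A 1 t 0 α * starRingEnd ℂ (psiFun N A 1 t 0 α)).re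
        + 2 * ((∫ α in (-Real.pi)..Real.pi,
                psiTFun N A' 1 t (h t) α * starRingEnd ℂ (psiFun N A 1 t (h t) α))
              + ∫ α in (-Real.pi)..Real.pi,
                psiTFun N A' (-1) t (h t) α *
                  starRingEnd ℂ (psiFun N A (-1) t (h t) α)).re := by
  intro t _
  have hd : h' t ≤ 0 := anti_deriv_nonpos hh hdec t
  have hH : 0 ≤ h t := (hpos t).le
  -- the energy as an explicit finite sum
  have hfun : (fun s =>
        (∫ α in (-Real.pi)..Real.pi, ‖psiFun N A 1 s (h s) α‖ ^ 2)
        + ∫ α in (-Real.pi)..Real.pi, ‖psiFun N A (-1) s (h s) α‖ ^ 2)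
      = fun s => 2 * Real.pi * ∑ k ∈ Finset.Icc (-(N : ℤ)) (N : ℤ),
          Complex.normSq (A k s) *
            (Real.exp (1 * (k:ℝ) * h s) ^ 2 + Real.exp ((-1) * (k:ℝ) * h s) ^ 2) := by
    funext s
    rw [sqint N A 1 s (h s), sqint N A (-1) s (h s), ← mul_add, ← Finset.sum_add_distrib]
    congr 1
    exact Finset.sum_congr rfl fun k _ => by ring
  -- derivative of the explicit sum
  have hD : HasDerivAt (fun s => 2 * Real.pi * ∑ k ∈ Finset.Icc (-(N : ℤ)) (N : ℤ),
        Complex.normSq (A k s) *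
          (Real.exp (1 * (k:ℝ) * h s) ^ 2 + Real.exp ((-1) * (k:ℝ) * h s) ^ 2))
      (2 * Real.pi * ∑ k ∈ Finset.Icc (-(N : ℤ)) (N : ℤ),
        (2 * (A' k t * (starRingEnd ℂ) (A k t)).re *
            (Real.exp (1 * (k:ℝ) * h t) ^ 2 + Real.exp ((-1) * (k:ℝ) * h t) ^ 2)
          + Complex.normSq (A k t) *
            (2 * Real.exp (1 * (k:ℝ) * h t) ^ 2 * ((1 * (k:ℝ)) * h' t)
              + 2 * Real.exp ((-1) * (k:ℝ) * h t) ^ 2 * (((-1) * (k:ℝ)) * h' t)))) t := by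
    apply HasDerivAt.const_mul
    apply HasDerivAt.fun_sum
    intro k _
    have hu := normSq_deriv (hA k t)
    have hv1 : HasDerivAt (fun s => Real.exp (1 * (k:ℝ) * h s) ^ 2)
        (2 * Real.exp (1 * (k:ℝ) * h t) ^ 2 * ((1 * (k:ℝ)) * h' t)) t := by
      have h0 := (((hh t).const_mul (1 * (k:ℝ))).exp).fun_pow 2
      refine h0.congr_deriv ?_
      push_cast
      ring
    have hv2 : HasDerivAt (fun s => Real.exp ((-1) * (k:ℝ) * h s) ^ 2)
        (2 * Real.exp ((-1) * (k:ℝ) * h t) ^ 2 * (((-1) * (k:ℝ)) * h' t)) t := by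
      have h0 := (((hh t).const_mul ((-1) * (k:ℝ))).exp).fun_pow 2
      refine h0.congr_deriv ?_
      push_cast
      ring
    exact hu.mul (hv1.add hv2)
  have hderiv : deriv (fun s =>
        (∫ α in (-Real.pi)..Real.pi, ‖psiFun N A 1 s (h s) α‖ ^ 2)
        + ∫ α in (-Real.pi)..Real.pi, ‖psiFun N A (-1) s (h s) α‖ ^ 2) t
      = 2 * Real.pi * ∑ k ∈ Finset.Icc (-(N : ℤ)) (N : ℤ),
        (2 * (A' k t * (starRingEnd ℂ) (A k t)).re *
            (Real.exp (1 * (k:ℝ) * h t) ^ 2 + Real.exp ((-1) * (k:ℝ) * h t) ^ 2)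
          + Complex.normSq (A k t) *
            (2 * Real.exp (1 * (k:ℝ) * h t) ^ 2 * ((1 * (k:ℝ)) * h' t)
              + 2 * Real.exp ((-1) * (k:ℝ) * h t) ^ 2 * (((-1) * (k:ℝ)) * h' t))) := by
    rw [hfun]
    exact hD.deriv
  rw [hderiv, Complex.add_re, Complex.add_re,
    lamre N A 1 t (h t), lamre N A (-1) t (h t), lamre N A 1 t 0,
    tre N A A' 1 t (h t), tre N A A' (-1) t (h t)]
  simp only [mul_zero, Real.exp_zero, one_pow, mul_one]
  -- now a pure inequality between finite sums
  rw [← mul_add (2 * Real.pi), ← mul_add (2 * Real.pi),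
    ← Finset.sum_add_distrib, ← Finset.sum_add_distrib]
  have habc : ∀ p q r : ℝ,
      h' t / 10 * (2 * Real.pi * p) - 10 * h' t * (2 * Real.pi * q) + 2 * (2 * Real.pi * r)
      = 2 * Real.pi * (h' t / 10 * p - 10 * h' t * q + 2 * r) := by intros; ring
  rw [habc]
  refine mul_le_mul_of_nonneg_left ?_ (by positivity : (0:ℝ) ≤ 2 * Real.pi)
  rw [Finset.mul_sum, Finset.mul_sum, Finset.mul_sum, ← Finset.sum_sub_distrib,
    ← Finset.sum_add_distrib]
  refine Finset.sum_le_sum fun k _ => ?_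
  -- per-mode inequality
  have e1 : Real.exp (1 * (k:ℝ) * h t) = Real.exp ((k:ℝ) * h t) := by rw [one_mul]
  have e2 : Real.exp ((-1) * (k:ℝ) * h t) = Real.exp (-((k:ℝ) * h t)) := by
    congr 1; ring
  rw [e1, e2]
  have hc := core (k:ℝ) (h t) (h' t) (Complex.normSq (A k t)) hH hd (Complex.normSq_nonneg _)
  nlinarith [hc]


end
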